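/- arXiv:1809.06540 — 5 statements merged into one kernel-verified Lean document; each statement's English description precedes it below -/
import Mathlib

section
/- Let K ∈ ℝ^{n_u×n_x} and b ∈ ℝ^{n_u} be given, assume 𝕊 is nonempty, and suppose the terminal set 𝔽 satisfies: every element of 𝔽 is of the form (x, Y𝕊 + y) with x ∈ 𝕏 and (Y, y) ∈ 𝕐, and for every (x, Y𝕊 + y) ∈ 𝔽 with (Y, y) ∈ 𝕐 one has K x + b ∈ 𝕌 and, for every s ∈ 𝕊, ((A + B K) x + B b + E(Y s + y), Y𝕊 + y) ∈ 𝔽 (i.e., 𝔽 is adjustable positive invariant for the closed loop u = K x + b with the successor uncertainty set equal to the current one). Let N ≥ 1 and let x be affinely feasible with horizon N and terminal set 𝔽, witnessed by a solution with first-stage input p_0 and first pair (Y_0, y_0). Then for every s_0 ∈ 𝕊, the successor state A x + B p_0 + E(Y_0 s_0 + y_0) is affinely feasible with horizon N and terminal set 𝔽. -/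
/-- The polytope `𝕊 = {s : G s ≤ g}` (componentwise inequality). -/
def poly {l ns : ℕ} (G : Matrix (Fin l) (Fin ns) ℝ) (gv : Fin l → ℝ) :
    Set (Fin ns → ℝ) :=
  {s | G.mulVec s ≤ gv}

/-- The uncertainty set `Y 𝕊 + y = {Y s + y : s ∈ 𝕊}`. -/
def affSet {nw ns : ℕ} (Y : Matrix (Fin nw) (Fin ns) ℝ) (y : Fin nw → ℝ)
    (S : Set (Fin ns → ℝ)) : Set (Fin nw → ℝ) :=
  (fun s => Y.mulVec s + y) '' S

/-- The affine disturbance feedback input `u_k(s) = p_k + ∑_{j<k} P_{k,j} s_j`. -/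
def affInput {nu ns : ℕ} (p : ℕ → Fin nu → ℝ) (P : ℕ → ℕ → Matrix (Fin nu) (Fin ns) ℝ)
    (s : ℕ → Fin ns → ℝ) (k : ℕ) : Fin nu → ℝ :=
  p k + ∑ j ∈ Finset.range k, (P k j).mulVec (s j)

/-- Trajectory `x_0(s) = x`, `x_{k+1}(s) = A x_k(s) + B u_k(s) + E (Y_k s_k + y_k)`
under the affine disturbance feedback policy. -/
def affTraj {nx nu nw ns : ℕ} (A : Matrix (Fin nx) (Fin nx) ℝ)
    (B : Matrix (Fin nx) (Fin nu) ℝ) (E : Matrix (Fin nx) (Fin nw) ℝ)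
    (p : ℕ → Fin nu → ℝ) (P : ℕ → ℕ → Matrix (Fin nu) (Fin ns) ℝ)
    (Ym : ℕ → Matrix (Fin nw) (Fin ns) ℝ) (yv : ℕ → Fin nw → ℝ)
    (x : Fin nx → ℝ) (s : ℕ → Fin ns → ℝ) : ℕ → Fin nx → ℝ
  | 0 => x
  | k + 1 =>
      A.mulVec (affTraj A B E p P Ym yv x s k) + B.mulVec (affInput p P s k) +
        E.mulVec ((Ym k).mulVec (s k) + yv k)

/-- `(p, P, Y, y)` is an affine disturbance feedback solution over horizon `N` at state
`x`: the uncertainty parameters are admissible, and for every primitive sequence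
`s ∈ 𝕊^N` the state and input constraints hold along the horizon and the terminal pair
`(x_N(s), Y_{N-1} 𝕊 + y_{N-1})` lies in `F`. -/
def AffSol {nx nu nw ns : ℕ} (A : Matrix (Fin nx) (Fin nx) ℝ)
    (B : Matrix (Fin nx) (Fin nu) ℝ) (E : Matrix (Fin nx) (Fin nw) ℝ)
    (X : Set (Fin nx → ℝ)) (U : Set (Fin nu → ℝ)) (S : Set (Fin ns → ℝ))
    (Ys : Set (Matrix (Fin nw) (Fin ns) ℝ × (Fin nw → ℝ)))
    (F : Set ((Fin nx → ℝ) × Set (Fin nw → ℝ))) (N : ℕ) (x : Fin nx → ℝ)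
    (p : ℕ → Fin nu → ℝ) (P : ℕ → ℕ → Matrix (Fin nu) (Fin ns) ℝ)
    (Ym : ℕ → Matrix (Fin nw) (Fin ns) ℝ) (yv : ℕ → Fin nw → ℝ) : Prop :=
  (∀ k, k < N → (Ym k, yv k) ∈ Ys) ∧
  ∀ s : ℕ → Fin ns → ℝ, (∀ k, k < N → s k ∈ S) →
    (∀ k, k < N → affTraj A B E p P Ym yv x s k ∈ X ∧ affInput p P s k ∈ U) ∧
    (affTraj A B E p P Ym yv x s N, affSet (Ym (N - 1)) (yv (N - 1)) S) ∈ F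

/-- `x` is affinely feasible with horizon `N` and terminal set `F`. -/
def AffFeasible {nx nu nw ns : ℕ} (A : Matrix (Fin nx) (Fin nx) ℝ)
    (B : Matrix (Fin nx) (Fin nu) ℝ) (E : Matrix (Fin nx) (Fin nw) ℝ)
    (X : Set (Fin nx → ℝ)) (U : Set (Fin nu → ℝ)) (S : Set (Fin ns → ℝ))
    (Ys : Set (Matrix (Fin nw) (Fin ns) ℝ × (Fin nw → ℝ)))
    (F : Set ((Fin nx → ℝ) × Set (Fin nw → ℝ))) (N : ℕ) (x : Fin nx → ℝ) : Prop :=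
  ∃ (p : ℕ → Fin nu → ℝ) (P : ℕ → ℕ → Matrix (Fin nu) (Fin ns) ℝ)
    (Ym : ℕ → Matrix (Fin nw) (Fin ns) ℝ) (yv : ℕ → Fin nw → ℝ),
    AffSol A B E X U S Ys F N x p P Ym yv

/-!
Shift the witness by one stage. Once `s0` is realized, the tail of the policy, with the terms
`P_{k,0} s0` absorbed into the offsets, steers the successor state along the old trajectory, so
the first `N - 1` stages stay feasible and end at the old terminal state `x_N`. The freed last
stage uses the terminal feedback `u = K x + b`: the trajectory is affine in the primitives, so
this input is itself an affine disturbance feedback, and the invariance of `𝔽` with an unchanged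
uncertainty set puts the new terminal pair back in `𝔽`.
-/

open Matrix Finset

namespace AffineDisturbanceFeedback

variable {nx nu nw ns : ℕ} (A : Matrix (Fin nx) (Fin nx) ℝ) (B : Matrix (Fin nx) (Fin nu) ℝ)
  (E : Matrix (Fin nx) (Fin nw) ℝ)

theorem affTraj_congr {p q : ℕ → Fin nu → ℝ} {P Q : ℕ → ℕ → Matrix (Fin nu) (Fin ns) ℝ}
    {Ym Zm : ℕ → Matrix (Fin nw) (Fin ns) ℝ} {yv zv : ℕ → Fin nw → ℝ} {n : ℕ}
    (hp : ∀ k < n, p k = q k) (hP : ∀ k < n, P k = Q k) (hY : ∀ k < n, Ym k = Zm k)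
    (hy : ∀ k < n, yv k = zv k) (x : Fin nx → ℝ) (s : ℕ → Fin ns → ℝ) :
    affTraj A B E p P Ym yv x s n = affTraj A B E q Q Zm zv x s n := by
  induction n with
  | zero => rfl
  | succ n ih =>
    have hlt : n < n + 1 := n.lt_succ_self
    simp only [affTraj, affInput, hp n hlt, hP n hlt, hY n hlt, hy n hlt,
      ih (fun k hk => hp k (hk.trans hlt)) (fun k hk => hP k (hk.trans hlt))
        (fun k hk => hY k (hk.trans hlt)) (fun k hk => hy k (hk.trans hlt))]

theorem exists_affTraj_eq_affine (p : ℕ → Fin nu → ℝ) (P : ℕ → ℕ → Matrix (Fin nu) (Fin ns) ℝ)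
    (Ym : ℕ → Matrix (Fin nw) (Fin ns) ℝ) (yv : ℕ → Fin nw → ℝ) (x : Fin nx → ℝ) (k : ℕ) :
    ∃ (c : Fin nx → ℝ) (M : ℕ → Matrix (Fin nx) (Fin ns) ℝ), ∀ s,
      affTraj A B E p P Ym yv x s k = c + ∑ j ∈ range k, M j *ᵥ s j := by
  induction k with
  | zero => exact ⟨x, 0, fun s => by simp [affTraj]⟩
  | succ k ih =>
    obtain ⟨c, M, hM⟩ := ih
    refine ⟨A *ᵥ c + B *ᵥ p k + E *ᵥ yv k,
      Function.update (fun j => A * M j + B * P k j) k (E * Ym k), fun s => ?_⟩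
    have hbelow : ∀ j ∈ range k, Function.update (fun j => A * M j + B * P k j) k (E * Ym k) j
        *ᵥ s j = A *ᵥ (M j *ᵥ s j) + B *ᵥ (P k j *ᵥ s j) := fun j hj => by
      rw [Function.update_of_ne (mem_range.mp hj).ne, add_mulVec, mulVec_mulVec, mulVec_mulVec]
    rw [sum_range_succ, sum_congr rfl hbelow, Function.update_self, affTraj, hM, affInput]
    simp only [mulVec_add, mulVec_sum, sum_add_distrib, mulVec_mulVec]
    abel

theorem affTraj_succ_of_affInput_eq {p : ℕ → Fin nu → ℝ}
    {P : ℕ → ℕ → Matrix (Fin nu) (Fin ns) ℝ} {Ym : ℕ → Matrix (Fin nw) (Fin ns) ℝ}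
    {yv : ℕ → Fin nw → ℝ} {x : Fin nx → ℝ}
    {s : ℕ → Fin ns → ℝ} {k : ℕ} {K : Matrix (Fin nu) (Fin nx) ℝ} {b : Fin nu → ℝ}
    (h : affInput p P s k = K *ᵥ affTraj A B E p P Ym yv x s k + b) :
    affTraj A B E p P Ym yv x s (k + 1) =
      (A + B * K) *ᵥ affTraj A B E p P Ym yv x s k + B *ᵥ b + E *ᵥ (Ym k *ᵥ s k + yv k) := by
  rw [affTraj, h, add_mulVec, mulVec_add, ← mulVec_mulVec]
  abel

theorem exists_affInput_eq_feedback (p : ℕ → Fin nu → ℝ)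
    (P : ℕ → ℕ → Matrix (Fin nu) (Fin ns) ℝ) (Ym : ℕ → Matrix (Fin nw) (Fin ns) ℝ)
    (yv : ℕ → Fin nw → ℝ) (x : Fin nx → ℝ)
    (K : Matrix (Fin nu) (Fin nx) ℝ) (b : Fin nu → ℝ) (n : ℕ) :
    ∃ (p' : ℕ → Fin nu → ℝ) (P' : ℕ → ℕ → Matrix (Fin nu) (Fin ns) ℝ),
      (∀ k < n, p' k = p k) ∧ (∀ k < n, P' k = P k) ∧
      ∀ s, affInput p' P' s n = K *ᵥ affTraj A B E p' P' Ym yv x s n + b := by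
  obtain ⟨c, M, hM⟩ := exists_affTraj_eq_affine A B E p P Ym yv x n
  have hp : ∀ k < n, Function.update p n (K *ᵥ c + b) k = p k :=
    fun k hk => Function.update_of_ne hk.ne _ _
  have hP : ∀ k < n, Function.update P n (fun j => K * M j) k = P k :=
    fun k hk => Function.update_of_ne hk.ne _ _
  refine ⟨_, _, hp, hP, fun s => ?_⟩
  rw [affTraj_congr A B E hp hP (fun _ _ => rfl) (fun _ _ => rfl), hM, affInput,
    Function.update_self, Function.update_self]
  simp only [mulVec_add, mulVec_sum, mulVec_mulVec]
  abel

/-- With `shiftGain`, the tail of the policy `(p, P)` once the first primitive `s0` is known. -/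
def shiftOffset (p : ℕ → Fin nu → ℝ) (P : ℕ → ℕ → Matrix (Fin nu) (Fin ns) ℝ)
    (s0 : Fin ns → ℝ) (k : ℕ) : Fin nu → ℝ :=
  p (k + 1) + P (k + 1) 0 *ᵥ s0

def shiftGain (P : ℕ → ℕ → Matrix (Fin nu) (Fin ns) ℝ) (k j : ℕ) : Matrix (Fin nu) (Fin ns) ℝ :=
  P (k + 1) (j + 1)

theorem affInput_shift (p : ℕ → Fin nu → ℝ) (P : ℕ → ℕ → Matrix (Fin nu) (Fin ns) ℝ)
    (s0 : Fin ns → ℝ) (s : ℕ → Fin ns → ℝ) (k : ℕ) :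
    affInput (shiftOffset p P s0) (shiftGain P) s k =
      affInput p P (Stream'.cons s0 s) (k + 1) := by
  simp only [affInput, sum_range_succ', shiftOffset, shiftGain]
  exact (add_assoc _ _ _).trans (congrArg _ (add_comm _ _))

theorem affTraj_shift (p : ℕ → Fin nu → ℝ) (P : ℕ → ℕ → Matrix (Fin nu) (Fin ns) ℝ)
    (Ym : ℕ → Matrix (Fin nw) (Fin ns) ℝ) (yv : ℕ → Fin nw → ℝ) (x : Fin nx → ℝ)
    (s0 : Fin ns → ℝ) (s : ℕ → Fin ns → ℝ) (k : ℕ) :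
    affTraj A B E (shiftOffset p P s0) (shiftGain P) (fun k => Ym (k + 1)) (fun k => yv (k + 1))
        (A *ᵥ x + B *ᵥ p 0 + E *ᵥ (Ym 0 *ᵥ s0 + yv 0)) s k =
      affTraj A B E p P Ym yv x (Stream'.cons s0 s) (k + 1) := by
  induction k with
  | zero => simp only [affTraj, affInput, range_zero, sum_empty, add_zero]; rfl
  | succ k ih => rw [affTraj, ih, affInput_shift]; rfl

end AffineDisturbanceFeedback

open AffineDisturbanceFeedback in
theorem successor_affFeasible_general {nx nu nw ns l : ℕ}
    (A : Matrix (Fin nx) (Fin nx) ℝ) (B : Matrix (Fin nx) (Fin nu) ℝ)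
    (E : Matrix (Fin nx) (Fin nw) ℝ)
    (X : Set (Fin nx → ℝ)) (U : Set (Fin nu → ℝ))
    (G : Matrix (Fin l) (Fin ns) ℝ) (gv : Fin l → ℝ)
    (Ys : Set (Matrix (Fin nw) (Fin ns) ℝ × (Fin nw → ℝ)))
    (F : Set ((Fin nx → ℝ) × Set (Fin nw → ℝ)))
    (K : Matrix (Fin nu) (Fin nx) ℝ) (b : Fin nu → ℝ)
    (hF1 : ∀ q ∈ F, q.1 ∈ X ∧
      ∃ (Y : Matrix (Fin nw) (Fin ns) ℝ) (y : Fin nw → ℝ),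
        (Y, y) ∈ Ys ∧ q.2 = affSet Y y (poly G gv))
    (hF2 : ∀ (x : Fin nx → ℝ) (Y : Matrix (Fin nw) (Fin ns) ℝ) (y : Fin nw → ℝ),
      (Y, y) ∈ Ys → (x, affSet Y y (poly G gv)) ∈ F →
      K.mulVec x + b ∈ U ∧
      ∀ s ∈ poly G gv,
        ((A + B * K).mulVec x + B.mulVec b + E.mulVec (Y.mulVec s + y),
          affSet Y y (poly G gv)) ∈ F)
    (N : ℕ) (hN : 1 ≤ N) (x : Fin nx → ℝ)
    (p : ℕ → Fin nu → ℝ) (P : ℕ → ℕ → Matrix (Fin nu) (Fin ns) ℝ)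
    (Ym : ℕ → Matrix (Fin nw) (Fin ns) ℝ) (yv : ℕ → Fin nw → ℝ)
    (hsol : AffSol A B E X U (poly G gv) Ys F N x p P Ym yv) :
    ∀ s0 ∈ poly G gv,
      AffFeasible A B E X U (poly G gv) Ys F N
        (A.mulVec x + B.mulVec (p 0) + E.mulVec ((Ym 0).mulVec s0 + yv 0)) := by
  intro s0 hs0
  obtain ⟨M, rfl⟩ : ∃ M, N = M + 1 := ⟨N - 1, by omega⟩
  obtain ⟨hYs, hsol⟩ := hsol
  -- The uncertainty parameters shift by one stage, the last one being repeated.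
  set Ym' : ℕ → Matrix (Fin nw) (Fin ns) ℝ := fun k => Ym (min (k + 1) M)
  set yv' : ℕ → Fin nw → ℝ := fun k => yv (min (k + 1) M)
  have hshift : ∀ k < M, Ym' k = Ym (k + 1) ∧ yv' k = yv (k + 1) := fun k hk => by
    simp only [Ym', yv', min_eq_left hk.nat_succ_le, and_self]
  obtain ⟨p', P', hp', hP', hfb⟩ := exists_affInput_eq_feedback A B E (shiftOffset p P s0)
    (shiftGain P) Ym' yv' (A *ᵥ x + B *ᵥ p 0 + E *ᵥ (Ym 0 *ᵥ s0 + yv 0)) K b M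
  refine ⟨p', P', Ym', yv', fun k hk => hYs _ (by omega), fun s hs => ?_⟩
  obtain ⟨hstage, hterm⟩ := hsol (Stream'.cons s0 s) fun
    | 0, _ => hs0
    | k + 1, hk => hs k (by omega)
  have htraj : ∀ k ≤ M, affTraj A B E p' P' Ym' yv' _ s k =
      affTraj A B E p P Ym yv x (Stream'.cons s0 s) (k + 1) := fun k hk => by
    rw [← affTraj_shift]
    exact affTraj_congr A B E (fun j hj => hp' j (by omega)) (fun j hj => hP' j (by omega))
      (fun j hj => (hshift j (by omega)).1) (fun j hj => (hshift j (by omega)).2) _ _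
  have hlast := hF2 _ _ _ (hYs M (by omega)) hterm
  refine ⟨fun k hk => ?_, ?_⟩
  · obtain hk | rfl := Nat.lt_succ_iff_lt_or_eq.mp hk
    · rw [htraj k hk.le, affInput, hp' k hk, hP' k hk, ← affInput, affInput_shift]
      exact hstage (k + 1) (by omega)
    · rw [hfb, htraj k le_rfl]
      exact ⟨(hF1 _ hterm).1, hlast.1⟩
  · rw [affTraj_succ_of_affInput_eq A B E (hfb s), htraj M le_rfl]
    simpa [Ym', yv'] using hlast.2 (s M) (hs M (by omega))

/-- suppose every element of `F` has the form `(x, Y𝕊 + y)` with `x ∈ X`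
and `(Y, y) ∈ 𝕐`, and `F` is adjustable positive invariant for the closed loop
`u = K x + b` with the successor uncertainty set equal to the current one.  If `N ≥ 1`
and `x` is affinely feasible with witness `(p, P, Ym, yv)`, then for every `s0 ∈ 𝕊` the
successor state `A x + B p_0 + E (Y_0 s0 + y_0)` is affinely feasible as well. -/
theorem successor_affFeasible {nx nu nw ns l : ℕ}
    (A : Matrix (Fin nx) (Fin nx) ℝ) (B : Matrix (Fin nx) (Fin nu) ℝ)
    (E : Matrix (Fin nx) (Fin nw) ℝ)
    (X : Set (Fin nx → ℝ)) (U : Set (Fin nu → ℝ))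
    (G : Matrix (Fin l) (Fin ns) ℝ) (gv : Fin l → ℝ)
    (Ys : Set (Matrix (Fin nw) (Fin ns) ℝ × (Fin nw → ℝ)))
    (F : Set ((Fin nx → ℝ) × Set (Fin nw → ℝ)))
    (K : Matrix (Fin nu) (Fin nx) ℝ) (b : Fin nu → ℝ)
    (hS : (poly G gv).Nonempty)
    (hF1 : ∀ q ∈ F, q.1 ∈ X ∧
      ∃ (Y : Matrix (Fin nw) (Fin ns) ℝ) (y : Fin nw → ℝ),
        (Y, y) ∈ Ys ∧ q.2 = affSet Y y (poly G gv))
    (hF2 : ∀ (x : Fin nx → ℝ) (Y : Matrix (Fin nw) (Fin ns) ℝ) (y : Fin nw → ℝ),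
      (Y, y) ∈ Ys → (x, affSet Y y (poly G gv)) ∈ F →
      K.mulVec x + b ∈ U ∧
      ∀ s ∈ poly G gv,
        ((A + B * K).mulVec x + B.mulVec b + E.mulVec (Y.mulVec s + y),
          affSet Y y (poly G gv)) ∈ F)
    (N : ℕ) (hN : 1 ≤ N) (x : Fin nx → ℝ)
    (p : ℕ → Fin nu → ℝ) (P : ℕ → ℕ → Matrix (Fin nu) (Fin ns) ℝ)
    (Ym : ℕ → Matrix (Fin nw) (Fin ns) ℝ) (yv : ℕ → Fin nw → ℝ)
    (hsol : AffSol A B E X U (poly G gv) Ys F N x p P Ym yv) :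
    ∀ s0 ∈ poly G gv,
      AffFeasible A B E X U (poly G gv) Ys F N
        (A.mulVec x + B.mulVec (p 0) + E.mulVec ((Ym 0).mulVec s0 + yv 0)) :=
  successor_affFeasible_general A B E X U G gv Ys F K b hF1 hF2 N hN x p P Ym yv hsol
end

section
/- Fix an initial state x ∈ ℝ^{n_x}, matrices K_0, …, K_{N-1} ∈ ℝ^{n_u×n_x}, vectors b_0, …, b_{N-1} ∈ ℝ^{n_u}, and pairs (Y_k, y_k) ∈ ℝ^{n_w×n_s} × ℝ^{n_w} (k = 0, …, N-1). Consider, for s = (s_0, …, s_{N-1}) ∈ ℝ^{N n_s}, the state-feedback closed-loop trajectory x_0(s) = x, x_{k+1}(s) = A x_k(s) + B(K_k x_k(s) + b_k) + E(Y_k s_k + y_k). Then there exist vectors p_k ∈ ℝ^{n_u} and matrices P_{k,j} ∈ ℝ^{n_u×n_s} (0 ≤ j < k ≤ N-1) such that for every s ∈ ℝ^{N n_s} and every k, the affine disturbance feedback input p_k + Σ_{j<k} P_{k,j} s_j equals K_k x_k(s) + b_k; consequently the affine disturbance feedback policy generates exactly the same state and input trajectories as the affine state feedback policy. -/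
/-- Closed-loop trajectory under the affine state feedback policy `u_k = K_k x_k + b_k`:
`x_0(s) = x`, `x_{k+1}(s) = A x_k(s) + B (K_k x_k(s) + b_k) + E (Y_k s_k + y_k)`. -/
def sfTraj {nx nu nw ns : ℕ} (A : Matrix (Fin nx) (Fin nx) ℝ)
    (B : Matrix (Fin nx) (Fin nu) ℝ) (E : Matrix (Fin nx) (Fin nw) ℝ)
    (K : ℕ → Matrix (Fin nu) (Fin nx) ℝ) (b : ℕ → Fin nu → ℝ)
    (Ym : ℕ → Matrix (Fin nw) (Fin ns) ℝ) (yv : ℕ → Fin nw → ℝ)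
    (x : Fin nx → ℝ) (s : ℕ → Fin ns → ℝ) : ℕ → Fin nx → ℝ
  | 0 => x
  | k + 1 =>
      A.mulVec (sfTraj A B E K b Ym yv x s k) +
        B.mulVec ((K k).mulVec (sfTraj A B E K b Ym yv x s k) + b k) +
        E.mulVec ((Ym k).mulVec (s k) + yv k)

open Matrix

section

variable {nx nu nw ns : ℕ} (A : Matrix (Fin nx) (Fin nx) ℝ) (B : Matrix (Fin nx) (Fin nu) ℝ)
  (E : Matrix (Fin nx) (Fin nw) ℝ) (K : ℕ → Matrix (Fin nu) (Fin nx) ℝ)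
  (Ym : ℕ → Matrix (Fin nw) (Fin ns) ℝ)

/-- The primitive `s_j` enters the state through `E Y_j` and then propagates under the
closed-loop matrices `A + B K_i`. -/
def sfGain : ℕ → ℕ → Matrix (Fin nx) (Fin ns) ℝ
  | 0, _ => 0
  | k + 1, j => if j = k then E * Ym k else (A + B * K k) * sfGain k j

theorem sfGain_succ_of_lt {k j : ℕ} (hj : j < k) :
    sfGain A B E K Ym (k + 1) j = (A + B * K k) * sfGain A B E K Ym k j := by
  rw [sfGain, if_neg hj.ne]

theorem sfGain_succ_self (k : ℕ) : sfGain A B E K Ym (k + 1) k = E * Ym k := by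
  rw [sfGain, if_pos rfl]

variable (b : ℕ → Fin nu → ℝ) (yv : ℕ → Fin nw → ℝ) (x : Fin nx → ℝ)

theorem sfTraj_eq_sfTraj_zero_add_sum (s : ℕ → Fin ns → ℝ) (k : ℕ) :
    sfTraj A B E K b Ym yv x s k =
      sfTraj A B E K b Ym yv x 0 k + ∑ j ∈ Finset.range k, sfGain A B E K Ym k j *ᵥ s j := by
  induction k with
  | zero => simp [sfTraj]
  | succ k ih =>
    have hgain : ∑ j ∈ Finset.range k, sfGain A B E K Ym (k + 1) j *ᵥ s j =
        (A + B * K k) *ᵥ ∑ j ∈ Finset.range k, sfGain A B E K Ym k j *ᵥ s j := by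
      rw [mulVec_sum]
      refine Finset.sum_congr rfl fun j hj => ?_
      rw [sfGain_succ_of_lt A B E K Ym (Finset.mem_range.mp hj), mulVec_mulVec]
    rw [Finset.sum_range_succ, hgain, sfGain_succ_self, ← mulVec_mulVec, sfTraj, sfTraj,
      ih]
    simp only [Pi.zero_apply, mulVec_zero, zero_add, mulVec_add, add_mulVec,
      mulVec_mulVec]
    abel

theorem affTraj_eq_sfTraj_of_affInput_eq {p : ℕ → Fin nu → ℝ}
    {P : ℕ → ℕ → Matrix (Fin nu) (Fin ns) ℝ} {s : ℕ → Fin ns → ℝ}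
    (h : ∀ k, affInput p P s k = K k *ᵥ sfTraj A B E K b Ym yv x s k + b k) (k : ℕ) :
    affTraj A B E p P Ym yv x s k = sfTraj A B E K b Ym yv x s k := by
  induction k with
  | zero => rfl
  | succ k ih => rw [affTraj, sfTraj, ih, h k]

theorem affInput_sfGain_eq (s : ℕ → Fin ns → ℝ) (k : ℕ) :
    affInput (fun k => K k *ᵥ sfTraj A B E K b Ym yv x 0 k + b k)
        (fun k j => K k * sfGain A B E K Ym k j) s k =
      K k *ᵥ sfTraj A B E K b Ym yv x s k + b k := by
  rw [affInput, sfTraj_eq_sfTraj_zero_add_sum A B E K Ym b yv x s k, mulVec_add,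
    mulVec_sum]
  simp only [mulVec_mulVec]
  abel

end

/-- every affine state feedback policy `u_k = K_k x_k + b_k` can be
represented as an affine disturbance feedback policy `u_k = p_k + ∑_{j<k} P_{k,j} s_j`:
the generated inputs coincide for every primitive sequence `s`, and consequently the
state trajectories coincide as well. -/
theorem stateFeedback_eq_disturbanceFeedback {nx nu nw ns : ℕ}
    (A : Matrix (Fin nx) (Fin nx) ℝ) (B : Matrix (Fin nx) (Fin nu) ℝ)
    (E : Matrix (Fin nx) (Fin nw) ℝ) (N : ℕ) (x : Fin nx → ℝ)
    (K : ℕ → Matrix (Fin nu) (Fin nx) ℝ) (b : ℕ → Fin nu → ℝ)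
    (Ym : ℕ → Matrix (Fin nw) (Fin ns) ℝ) (yv : ℕ → Fin nw → ℝ) :
    ∃ (p : ℕ → Fin nu → ℝ) (P : ℕ → ℕ → Matrix (Fin nu) (Fin ns) ℝ),
      ∀ s : ℕ → Fin ns → ℝ,
        (∀ k, k < N →
          affInput p P s k =
            (K k).mulVec (sfTraj A B E K b Ym yv x s k) + b k) ∧
        (∀ k, k ≤ N →
          affTraj A B E p P Ym yv x s k = sfTraj A B E K b Ym yv x s k) := by
  refine ⟨fun k => K k *ᵥ sfTraj A B E K b Ym yv x 0 k + b k,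
    fun k j => K k * sfGain A B E K Ym k j, fun s => ?_⟩
  have hinput := affInput_sfGain_eq A B E K Ym b yv x s
  exact ⟨fun k _ => hinput k,
    fun k _ => affTraj_eq_sfTraj_of_affInput_eq A B E K Ym b yv x hinput k⟩
end

section
/- Let K ∈ ℝ^{n_u×n_x} and b ∈ ℝ^{n_u}, and suppose Ω ⊆ ℝ^{n_x} × ℝ^{n_w×n_s} × ℝ^{n_w} satisfies: (i) for every (x, Y, y) ∈ Ω, x ∈ 𝕏 and (Y, y) ∈ 𝕐; and (ii) for every (x, Y, y) ∈ Ω and every s ∈ 𝕊, ((A + B K) x + B b + E(Y s + y), Y, y) ∈ Ω (i.e., Ω is a fixed point of the iteration Ω ↦ Pre(Ω, 𝕊) ∩ Ω of Algorithm 1 for the augmented autonomous dynamics). Then the set O_adj := {(x, Y𝕊 + y) : (x, Y, y) ∈ Ω} is an adjustable positive invariant set for the closed-loop system x_{k+1} = (A + B K) x_k + B b + E w_k subject to x_k ∈ 𝕏; moreover, the successor uncertainty set in the invariance property can always be taken equal to the current uncertainty set. -/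
/-- A set `O ⊆ X × 𝒫(ℝ^{n_w})` is an adjustable positive invariant set for the autonomous
system `x⁺ = g(x, w)`: for every `(x, W') ∈ O` there exists `W ⊆ ℝ^{n_w}` such that
`(g(x, w), W) ∈ O` for all `w ∈ W`. -/
def AdjPosInv {nx nw : ℕ} (g : (Fin nx → ℝ) → (Fin nw → ℝ) → (Fin nx → ℝ))
    (X : Set (Fin nx → ℝ)) (O : Set ((Fin nx → ℝ) × Set (Fin nw → ℝ))) : Prop :=
  (∀ p ∈ O, p.1 ∈ X) ∧
  ∀ p ∈ O, ∃ W : Set (Fin nw → ℝ), ∀ w ∈ W, (g p.1 w, W) ∈ O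

/-- if `Ω` (a set of triples `(x, Y, y)`) is a fixed point of the iteration
of Algorithm 1 for the augmented closed-loop dynamics, i.e. it satisfies the constraints
and is invariant under `x ↦ (A + BK) x + B b + E (Y s + y)` for all `s ∈ 𝕊` with frozen
`(Y, y)`, then `O_adj = {(x, Y𝕊 + y) : (x, Y, y) ∈ Ω}` is an adjustable positive
invariant set for the closed loop `x⁺ = (A + BK) x + B b + E w`; moreover, the successor
uncertainty set can always be taken equal to the current one. -/
theorem algorithm1_fixedPoint_adjPosInv {nx nu nw ns l : ℕ}
    (A : Matrix (Fin nx) (Fin nx) ℝ) (B : Matrix (Fin nx) (Fin nu) ℝ)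
    (E : Matrix (Fin nx) (Fin nw) ℝ)
    (X : Set (Fin nx → ℝ))
    (G : Matrix (Fin l) (Fin ns) ℝ) (gv : Fin l → ℝ)
    (Ys : Set (Matrix (Fin nw) (Fin ns) ℝ × (Fin nw → ℝ)))
    (K : Matrix (Fin nu) (Fin nx) ℝ) (b : Fin nu → ℝ)
    (Ω : Set ((Fin nx → ℝ) × Matrix (Fin nw) (Fin ns) ℝ × (Fin nw → ℝ)))
    (hΩ1 : ∀ q ∈ Ω, q.1 ∈ X ∧ (q.2.1, q.2.2) ∈ Ys)
    (hΩ2 : ∀ q ∈ Ω, ∀ s ∈ poly G gv,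
      ((A + B * K).mulVec q.1 + B.mulVec b + E.mulVec (q.2.1.mulVec s + q.2.2),
        q.2.1, q.2.2) ∈ Ω) :
    AdjPosInv (fun x w => (A + B * K).mulVec x + B.mulVec b + E.mulVec w) X
      {pw | ∃ q ∈ Ω, pw = (q.1, affSet q.2.1 q.2.2 (poly G gv))} ∧
    ∀ pw ∈ {pw : (Fin nx → ℝ) × Set (Fin nw → ℝ) |
        ∃ q ∈ Ω, pw = (q.1, affSet q.2.1 q.2.2 (poly G gv))},
      ∀ w ∈ pw.2,
        ((A + B * K).mulVec pw.1 + B.mulVec b + E.mulVec w, pw.2) ∈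
          {pw : (Fin nx → ℝ) × Set (Fin nw → ℝ) |
            ∃ q ∈ Ω, pw = (q.1, affSet q.2.1 q.2.2 (poly G gv))} := by

  have key : ∀ pw ∈ {pw : (Fin nx → ℝ) × Set (Fin nw → ℝ) |
        ∃ q ∈ Ω, pw = (q.1, affSet q.2.1 q.2.2 (poly G gv))},
      ∀ w ∈ pw.2,
        ((A + B * K).mulVec pw.1 + B.mulVec b + E.mulVec w, pw.2) ∈
          {pw : (Fin nx → ℝ) × Set (Fin nw → ℝ) |
            ∃ q ∈ Ω, pw = (q.1, affSet q.2.1 q.2.2 (poly G gv))} := by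
    rintro pw ⟨q, hq, rfl⟩ w hw
    obtain ⟨s, hs, rfl⟩ := hw
    exact ⟨_, hΩ2 q hq s hs, rfl⟩
  refine ⟨⟨?_, ?_⟩, key⟩
  · rintro p ⟨q, hq, rfl⟩
    exact (hΩ1 q hq).1
  · rintro p hp
    exact ⟨p.2, fun w hw => key p hp w hw⟩
end

section
/- Suppose Ω ⊆ ℝ^{n_x} × ℝ^{n_w×n_s} × ℝ^{n_w} satisfies: (i) for every (x, Y, y) ∈ Ω, x ∈ 𝕏 and (Y, y) ∈ 𝕐; and (ii) for every (x, Y, y) ∈ Ω there exists u ∈ 𝕌 such that for every s ∈ 𝕊, (A x + B u + E(Y s + y), Y, y) ∈ Ω (i.e., Ω is a fixed point of the iteration Ω ↦ Pre(Ω, 𝕊) ∩ Ω of Algorithm 2 for the augmented controlled dynamics). Then the set C_adj := {(x, Y𝕊 + y) : (x, Y, y) ∈ Ω} is an adjustable control invariant set for the system x_{k+1} = A x_k + B u_k + E w_k; moreover, the successor uncertainty set in the invariance property can always be taken equal to the current uncertainty set. -/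
/-- A set `C ⊆ X × 𝒫(ℝ^{n_w})` is an adjustable control invariant set for the system
`x⁺ = A x + B u + E w`: for every `(x, W') ∈ C` there exist `u ∈ U` and `W ⊆ ℝ^{n_w}`
such that `(A x + B u + E w, W) ∈ C` for all `w ∈ W`. -/
def AdjCtrlInv {nx nu nw : ℕ} (A : Matrix (Fin nx) (Fin nx) ℝ)
    (B : Matrix (Fin nx) (Fin nu) ℝ) (E : Matrix (Fin nx) (Fin nw) ℝ)
    (X : Set (Fin nx → ℝ)) (U : Set (Fin nu → ℝ))
    (C : Set ((Fin nx → ℝ) × Set (Fin nw → ℝ))) : Prop :=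
  (∀ p ∈ C, p.1 ∈ X) ∧
  ∀ p ∈ C, ∃ u ∈ U, ∃ W : Set (Fin nw → ℝ), ∀ w ∈ W,
    (A.mulVec p.1 + B.mulVec u + E.mulVec w, W) ∈ C

/-- if `Ω` (a set of triples `(x, Y, y)`) is a fixed point of the iteration
of Algorithm 2 for the augmented controlled dynamics, i.e. it satisfies the constraints
and from each of its points some admissible input keeps the successor in `Ω` for all
`s ∈ 𝕊` with frozen `(Y, y)`, then `C_adj = {(x, Y𝕊 + y) : (x, Y, y) ∈ Ω}` is an
adjustable control invariant set; moreover the successor uncertainty set can always be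
taken equal to the current one. -/
theorem algorithm2_fixedPoint_adjCtrlInv {nx nu nw ns l : ℕ}
    (A : Matrix (Fin nx) (Fin nx) ℝ) (B : Matrix (Fin nx) (Fin nu) ℝ)
    (E : Matrix (Fin nx) (Fin nw) ℝ)
    (X : Set (Fin nx → ℝ)) (U : Set (Fin nu → ℝ))
    (G : Matrix (Fin l) (Fin ns) ℝ) (gv : Fin l → ℝ)
    (Ys : Set (Matrix (Fin nw) (Fin ns) ℝ × (Fin nw → ℝ)))
    (Ω : Set ((Fin nx → ℝ) × Matrix (Fin nw) (Fin ns) ℝ × (Fin nw → ℝ)))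
    (hΩ1 : ∀ q ∈ Ω, q.1 ∈ X ∧ (q.2.1, q.2.2) ∈ Ys)
    (hΩ2 : ∀ q ∈ Ω, ∃ u ∈ U, ∀ s ∈ poly G gv,
      (A.mulVec q.1 + B.mulVec u + E.mulVec (q.2.1.mulVec s + q.2.2),
        q.2.1, q.2.2) ∈ Ω) :
    AdjCtrlInv A B E X U
      {pw | ∃ q ∈ Ω, pw = (q.1, affSet q.2.1 q.2.2 (poly G gv))} ∧
    ∀ pw ∈ {pw : (Fin nx → ℝ) × Set (Fin nw → ℝ) |
        ∃ q ∈ Ω, pw = (q.1, affSet q.2.1 q.2.2 (poly G gv))},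
      ∃ u ∈ U, ∀ w ∈ pw.2,
        (A.mulVec pw.1 + B.mulVec u + E.mulVec w, pw.2) ∈
          {pw : (Fin nx → ℝ) × Set (Fin nw → ℝ) |
            ∃ q ∈ Ω, pw = (q.1, affSet q.2.1 q.2.2 (poly G gv))} := by
  have key : ∀ pw ∈ {pw : (Fin nx → ℝ) × Set (Fin nw → ℝ) |
        ∃ q ∈ Ω, pw = (q.1, affSet q.2.1 q.2.2 (poly G gv))},
      ∃ u ∈ U, ∀ w ∈ pw.2,
        (A.mulVec pw.1 + B.mulVec u + E.mulVec w, pw.2) ∈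
          {pw : (Fin nx → ℝ) × Set (Fin nw → ℝ) |
            ∃ q ∈ Ω, pw = (q.1, affSet q.2.1 q.2.2 (poly G gv))} := by
    rintro pw ⟨q, hq, rfl⟩
    obtain ⟨u, hu, hinv⟩ := hΩ2 q hq
    refine ⟨u, hu, ?_⟩
    rintro w ⟨s, hs, rfl⟩
    exact ⟨_, hinv s hs, rfl⟩
  refine ⟨⟨?_, ?_⟩, key⟩
  · rintro p ⟨q, hq, rfl⟩
    exact (hΩ1 q hq).1
  · intro p hp
    obtain ⟨u, hu, h⟩ := key p hp
    exact ⟨u, hu, p.2, h⟩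
end

section
/- Suppose Ω ⊆ ℝ^{n_x} × ℝ^{n_w×n_s} × ℝ^{n_w} satisfies: (i) for every (x, Y, y) ∈ Ω, x ∈ 𝕏; and (ii) for every (x, Y, y) ∈ Ω there exists u ∈ 𝕌 such that for every s ∈ 𝕊, (A x + B u + E(Y s + y), Y, y) ∈ Ω. Then for every (x_0, Y, y) ∈ Ω there exists a feedback law κ : ℝ^{n_x} → ℝ^{n_u} such that for every disturbance sequence (w_t)_{t∈ℕ} with w_t ∈ Y𝕊 + y for all t, the closed-loop trajectory x_{t+1} = A x_t + B κ(x_t) + E w_t satisfies x_t ∈ 𝕏 and κ(x_t) ∈ 𝕌 for all t ∈ ℕ. -/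
/-- if `Ω` (a set of triples `(x, Y, y)`) satisfies the state constraint and
from each of its points some admissible input keeps the successor in `Ω` for all `s ∈ 𝕊`
with frozen `(Y, y)`, then from every `(x₀, Y, y) ∈ Ω` there is a feedback law `κ` whose
closed loop satisfies the state and input constraints for all times, for every
disturbance sequence taking values in the constant uncertainty set `Y𝕊 + y`. -/
theorem exists_feedback_indefinitely_feasible {nx nu nw ns l : ℕ}
    (A : Matrix (Fin nx) (Fin nx) ℝ) (B : Matrix (Fin nx) (Fin nu) ℝ)
    (E : Matrix (Fin nx) (Fin nw) ℝ)
    (X : Set (Fin nx → ℝ)) (U : Set (Fin nu → ℝ))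
    (G : Matrix (Fin l) (Fin ns) ℝ) (gv : Fin l → ℝ)
    (Ω : Set ((Fin nx → ℝ) × Matrix (Fin nw) (Fin ns) ℝ × (Fin nw → ℝ)))
    (hΩ1 : ∀ q ∈ Ω, q.1 ∈ X)
    (hΩ2 : ∀ q ∈ Ω, ∃ u ∈ U, ∀ s ∈ poly G gv,
      (A.mulVec q.1 + B.mulVec u + E.mulVec (q.2.1.mulVec s + q.2.2),
        q.2.1, q.2.2) ∈ Ω) :
    ∀ (x0 : Fin nx → ℝ) (Y : Matrix (Fin nw) (Fin ns) ℝ) (y : Fin nw → ℝ),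
      (x0, Y, y) ∈ Ω →
      ∃ κ : (Fin nx → ℝ) → (Fin nu → ℝ),
        ∀ w : ℕ → (Fin nw → ℝ), (∀ t, w t ∈ affSet Y y (poly G gv)) →
        ∀ xs : ℕ → (Fin nx → ℝ), xs 0 = x0 →
          (∀ t, xs (t + 1) = A.mulVec (xs t) + B.mulVec (κ (xs t)) + E.mulVec (w t)) →
          ∀ t, xs t ∈ X ∧ κ (xs t) ∈ U := by
  intro x0 Y y hx0
  classical
  refine ⟨fun x => if h : (x, Y, y) ∈ Ω then (hΩ2 _ h).choose else 0, ?_⟩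
  intro w hw xs hxs0 hrec
  have key : ∀ t, (xs t, Y, y) ∈ Ω := by
    intro t
    induction t with
    | zero => rw [hxs0]; exact hx0
    | succ t ih =>
      obtain ⟨s, hs, hws⟩ := hw t
      rw [hrec t, ← hws]
      simp only [dif_pos ih]
      exact (hΩ2 _ ih).choose_spec.2 s hs
  intro t
  refine ⟨hΩ1 _ (key t), ?_⟩
  simp only [dif_pos (key t)]
  exact (hΩ2 _ (key t)).choose_spec.1
end
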